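/- arXiv:2501.04276 — 5 statements merged into one kernel-verified Lean document; each statement's English description precedes it below -/
import Mathlib

section
/- Let S and E be the Euclidean spaces ℝ^n and ℝ^m. Suppose f_π : S → E → S satisfies ‖f_π(s₁,e₁) − f_π(s₂,e₂)‖ ≤ L_f(‖s₁−s₂‖ + ‖e₁−e₂‖) for all s₁,s₂ ∈ S and e₁,e₂ ∈ E, with L_f > 0. Let l, ζ : S → ℝ be Lipschitz with constants L_l and L_ζ, let γ ∈ (0,1) satisfy γ(1 + L_f) < 1, and let V be the discounted reach-avoid value function. Then for every parameter e ∈ E and all states s₁, s₂ ∈ S, |V(s₁,e) − V(s₂,e)| ≤ max(L_l, L_ζ) · ‖s₁ − s₂‖; i.e., for each fixed e, the map s ↦ V(s,e) is Lipschitz with constant max(L_l, L_ζ). -/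
noncomputable section

/-- The trajectory `ξ_s^e : ℕ → S` from initial state `s` under parameter `e`,
defined by `ξ(0) = s` and `ξ(t+1) = ξ(t) + f_π(ξ(t), e)`. -/
def traj {n m : ℕ}
    (f : EuclideanSpace ℝ (Fin n) → EuclideanSpace ℝ (Fin m) → EuclideanSpace ℝ (Fin n))
    (s : EuclideanSpace ℝ (Fin n)) (e : EuclideanSpace ℝ (Fin m)) :
    ℕ → EuclideanSpace ℝ (Fin n)
  | 0 => s
  | t + 1 => traj f s e t + f (traj f s e t) e

/-- The discounted payoff
`P(s,e,τ) = max(γ^τ · l(ξ_s^e(τ)), max_{κ ∈ {0,…,τ}} γ^κ · ζ(ξ_s^e(κ)))`. -/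
def payoff {n m : ℕ}
    (f : EuclideanSpace ℝ (Fin n) → EuclideanSpace ℝ (Fin m) → EuclideanSpace ℝ (Fin n))
    (l ζ : EuclideanSpace ℝ (Fin n) → ℝ) (γ : ℝ)
    (s : EuclideanSpace ℝ (Fin n)) (e : EuclideanSpace ℝ (Fin m)) (τ : ℕ) : ℝ :=
  max (γ ^ τ * l (traj f s e τ))
    ((Finset.range (τ + 1)).sup' Finset.nonempty_range_add_one
      (fun κ => γ ^ κ * ζ (traj f s e κ)))

/-- The discounted reach-avoid value function `V(s,e) = inf_{τ ∈ ℕ} P(s,e,τ)`. -/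
def raValue {n m : ℕ}
    (f : EuclideanSpace ℝ (Fin n) → EuclideanSpace ℝ (Fin m) → EuclideanSpace ℝ (Fin n))
    (l ζ : EuclideanSpace ℝ (Fin n) → ℝ) (γ : ℝ)
    (s : EuclideanSpace ℝ (Fin n)) (e : EuclideanSpace ℝ (Fin m)) : ℝ :=
  ⨅ τ : ℕ, payoff f l ζ γ s e τ

/-!
Every ingredient of the value function is Lipschitz in the state. The trajectory map
`s ↦ ξ_s^e(t)` iterates `x ↦ x + f_π(x, e)`, which is `(1 + L_f)`-Lipschitz, so it is
`(1 + L_f)^t`-Lipschitz; the discount `γ^t` beats this growth because `γ (1 + L_f) ≤ 1`, so each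
discounted term `γ^t g(ξ_s^e(t))` is as Lipschitz as `g`. Maxima, finite suprema and infima
(bounded below) of `K`-Lipschitz real functions are again `K`-Lipschitz.
-/

open scoped NNReal

namespace LipschitzWith

variable {α ι : Type*} [PseudoMetricSpace α] {K : ℝ≥0}

theorem finset_sup' {f : ι → α → ℝ} (hf : ∀ i, LipschitzWith K (f i)) (s : Finset ι)
    (hs : s.Nonempty) : LipschitzWith K fun x => s.sup' hs (f · x) :=
  LipschitzWith.of_le_add_mul K fun x y =>
    s.sup'_le hs _ fun i hi =>
      ((hf i).le_add_mul x y).trans (by gcongr; exact s.le_sup' (f · y) hi)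

theorem ciInf [Nonempty ι] {f : ι → α → ℝ} (hf : ∀ i, LipschitzWith K (f i))
    (hbdd : ∀ x, BddBelow (Set.range (f · x))) : LipschitzWith K fun x => ⨅ i, f i x := by
  refine LipschitzWith.of_le_add_mul K fun x y => ?_
  have h : (⨅ i, f i x) - K * dist x y ≤ ⨅ i, f i y :=
    le_ciInf fun i => sub_le_iff_le_add.2 ((ciInf_le (hbdd x) i).trans ((hf i).le_add_mul x y))
  linarith

end LipschitzWith

section ReachAvoid

variable {n m : ℕ}

theorem traj_eq_iterate (f : EuclideanSpace ℝ (Fin n) → EuclideanSpace ℝ (Fin m) →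
      EuclideanSpace ℝ (Fin n)) (s : EuclideanSpace ℝ (Fin n)) (e : EuclideanSpace ℝ (Fin m)) :
    ∀ t, traj f s e t = (fun x => x + f x e)^[t] s
  | 0 => rfl
  | t + 1 => by rw [Function.iterate_succ_apply', ← traj_eq_iterate f s e t, traj]

variable {f : EuclideanSpace ℝ (Fin n) → EuclideanSpace ℝ (Fin m) → EuclideanSpace ℝ (Fin n)}
  {e : EuclideanSpace ℝ (Fin m)} {Kf : ℝ≥0}

theorem lipschitzWith_traj (hf : LipschitzWith Kf (f · e)) (t : ℕ) :
    LipschitzWith ((1 + Kf) ^ t) (traj f · e t) := by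
  rw [show (traj f · e t) = (fun x => x + f x e)^[t] from funext (traj_eq_iterate f · e t)]
  exact (LipschitzWith.id.add hf).iterate t

theorem lipschitzWith_discounted_traj {γ : ℝ} (hγ : 0 ≤ γ) (hcontr : γ * (1 + Kf) ≤ 1)
    (hf : LipschitzWith Kf (f · e)) {g : EuclideanSpace ℝ (Fin n) → ℝ} {K : ℝ≥0}
    (hg : LipschitzWith K g) (t : ℕ) : LipschitzWith K fun s => γ ^ t * g (traj f s e t) := by
  refine LipschitzWith.of_dist_le_mul fun x y => ?_
  have hgt := (hg.comp (lipschitzWith_traj hf t)).dist_le_mul x y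
  have hdecay : (γ * (1 + Kf)) ^ t ≤ 1 := pow_le_one₀ (by positivity) hcontr
  calc dist (γ ^ t * g (traj f x e t)) (γ ^ t * g (traj f y e t))
      = γ ^ t * dist (g (traj f x e t)) (g (traj f y e t)) := by
        rw [Real.dist_eq, ← mul_sub, abs_mul, abs_of_nonneg (by positivity), Real.dist_eq]
    _ ≤ γ ^ t * (K * (1 + Kf) ^ t * dist x y) := by
        gcongr
        simpa only [Function.comp_def, NNReal.coe_mul, NNReal.coe_pow, NNReal.coe_add,
          NNReal.coe_one] using hgt
    _ = K * dist x y * (γ * (1 + Kf)) ^ t := by rw [mul_pow]; ring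
    _ ≤ K * dist x y := mul_le_of_le_one_right (by positivity) hdecay

variable {l ζ : EuclideanSpace ℝ (Fin n) → ℝ} {γ : ℝ}

theorem lipschitzWith_payoff (hγ : 0 ≤ γ) (hcontr : γ * (1 + Kf) ≤ 1)
    (hf : LipschitzWith Kf (f · e)) {Kl Kζ : ℝ≥0} (hl : LipschitzWith Kl l)
    (hζ : LipschitzWith Kζ ζ) (τ : ℕ) :
    LipschitzWith (max Kl Kζ) fun s => payoff f l ζ γ s e τ :=
  (lipschitzWith_discounted_traj hγ hcontr hf hl τ).max <|
    LipschitzWith.finset_sup' (lipschitzWith_discounted_traj hγ hcontr hf hζ) _ _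

theorem zeta_le_payoff (s : EuclideanSpace ℝ (Fin n)) (τ : ℕ) :
    ζ s ≤ payoff f l ζ γ s e τ := by
  have h0 : ζ s = γ ^ 0 * ζ (traj f s e 0) := by rw [pow_zero, one_mul, traj]
  rw [h0]
  exact ((Finset.range (τ + 1)).le_sup' (fun κ => γ ^ κ * ζ (traj f s e κ))
    (Finset.mem_range.2 τ.succ_pos)).trans (le_max_right _ _)

theorem lipschitzWith_raValue (hγ : 0 ≤ γ) (hcontr : γ * (1 + Kf) ≤ 1)
    (hf : LipschitzWith Kf (f · e)) {Kl Kζ : ℝ≥0} (hl : LipschitzWith Kl l)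
    (hζ : LipschitzWith Kζ ζ) : LipschitzWith (max Kl Kζ) fun s => raValue f l ζ γ s e :=
  LipschitzWith.ciInf (lipschitzWith_payoff hγ hcontr hf hl hζ) fun s =>
    ⟨ζ s, Set.forall_mem_range.2 (zeta_le_payoff s)⟩

end ReachAvoid

theorem nonneg_of_abs_sub_le_mul {E : Type*} [NormedAddCommGroup E] {g : E → ℝ} {L : ℝ}
    {x y : E} (hxy : x ≠ y) (hg : |g x - g y| ≤ L * ‖x - y‖) : 0 ≤ L :=
  nonneg_of_mul_nonneg_left ((abs_nonneg _).trans hg) (norm_pos_iff.2 (sub_ne_zero.2 hxy))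

theorem raValue_lipschitz_in_state_general {n m : ℕ}
    (f : EuclideanSpace ℝ (Fin n) → EuclideanSpace ℝ (Fin m) → EuclideanSpace ℝ (Fin n))
    (l ζ : EuclideanSpace ℝ (Fin n) → ℝ) (Lf Ll Lζ γ : ℝ)
    (hLf : 0 < Lf)
    (hf : ∀ (s₁ s₂ : EuclideanSpace ℝ (Fin n)) (e₁ e₂ : EuclideanSpace ℝ (Fin m)),
      ‖f s₁ e₁ - f s₂ e₂‖ ≤ Lf * (‖s₁ - s₂‖ + ‖e₁ - e₂‖))
    (hl : ∀ x y : EuclideanSpace ℝ (Fin n), |l x - l y| ≤ Ll * ‖x - y‖)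
    (hζ : ∀ x y : EuclideanSpace ℝ (Fin n), |ζ x - ζ y| ≤ Lζ * ‖x - y‖)
    (hγ0 : 0 < γ) (hcontr : γ * (1 + Lf) < 1)
    (e : EuclideanSpace ℝ (Fin m)) (s₁ s₂ : EuclideanSpace ℝ (Fin n)) :
    |raValue f l ζ γ s₁ e - raValue f l ζ γ s₂ e| ≤ max Ll Lζ * ‖s₁ - s₂‖ := by
  rcases eq_or_ne s₁ s₂ with rfl | hs
  · simp
  have hfe : LipschitzWith Lf.toNNReal (f · e) := LipschitzWith.of_dist_le' fun x y => by
    simpa only [dist_eq_norm, sub_self, norm_zero, add_zero] using hf x y e e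
  have hlip {g : EuclideanSpace ℝ (Fin n) → ℝ} {L : ℝ} (hg : ∀ x y, |g x - g y| ≤ L * ‖x - y‖) :
      LipschitzWith L.toNNReal g :=
    LipschitzWith.of_dist_le' fun x y => by rw [Real.dist_eq, dist_eq_norm]; exact hg x y
  have hV := lipschitzWith_raValue hγ0.le (by rw [Real.coe_toNNReal _ hLf.le]; exact hcontr.le)
    hfe (hlip hl) (hlip hζ)
  simpa only [dist_eq_norm, Real.norm_eq_abs, NNReal.coe_max,
    Real.coe_toNNReal _ (nonneg_of_abs_sub_le_mul hs (hl s₁ s₂)),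
    Real.coe_toNNReal _ (nonneg_of_abs_sub_le_mul hs (hζ s₁ s₂))] using hV.dist_le_mul s₁ s₂

/-- For each fixed environmental parameter `e`, the discounted reach-avoid value
function `s ↦ V(s,e)` is Lipschitz with constant `max(L_l, L_ζ)`. -/
theorem raValue_lipschitz_in_state {n m : ℕ}
    (f : EuclideanSpace ℝ (Fin n) → EuclideanSpace ℝ (Fin m) → EuclideanSpace ℝ (Fin n))
    (l ζ : EuclideanSpace ℝ (Fin n) → ℝ) (Lf Ll Lζ γ : ℝ)
    (hLf : 0 < Lf)
    (hf : ∀ (s₁ s₂ : EuclideanSpace ℝ (Fin n)) (e₁ e₂ : EuclideanSpace ℝ (Fin m)),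
      ‖f s₁ e₁ - f s₂ e₂‖ ≤ Lf * (‖s₁ - s₂‖ + ‖e₁ - e₂‖))
    (hl : ∀ x y : EuclideanSpace ℝ (Fin n), |l x - l y| ≤ Ll * ‖x - y‖)
    (hζ : ∀ x y : EuclideanSpace ℝ (Fin n), |ζ x - ζ y| ≤ Lζ * ‖x - y‖)
    (hγ0 : 0 < γ) (hγ1 : γ < 1) (hcontr : γ * (1 + Lf) < 1)
    (e : EuclideanSpace ℝ (Fin m)) (s₁ s₂ : EuclideanSpace ℝ (Fin n)) :
    |raValue f l ζ γ s₁ e - raValue f l ζ γ s₂ e| ≤ max Ll Lζ * ‖s₁ - s₂‖ :=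
  raValue_lipschitz_in_state_general f l ζ Lf Ll Lζ γ hLf hf hl hζ hγ0 hcontr e s₁ s₂
end
end

section
/- Let S and E be the Euclidean spaces ℝ^n and ℝ^m. Suppose f_π : S → E → S satisfies ‖f_π(s₁,e₁) − f_π(s₂,e₂)‖ ≤ L_f(‖s₁−s₂‖ + ‖e₁−e₂‖) for all s₁,s₂ ∈ S and e₁,e₂ ∈ E, with L_f ≥ 0. Then for every initial state s ∈ S, all parameters e₁, e₂ ∈ E, and every time t ∈ ℕ, the trajectories satisfy ‖ξ_s^{e₁}(t) − ξ_s^{e₂}(t)‖ ≤ ((1 + L_f)^t − 1) · ‖e₁ − e₂‖. -/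
noncomputable section

/-- Divergence of trajectories under different environmental parameters:
`‖ξ_s^{e₁}(t) − ξ_s^{e₂}(t)‖ ≤ ((1 + L_f)^t − 1) · ‖e₁ − e₂‖`. -/
theorem traj_dist_le_of_param {n m : ℕ}
    (f : EuclideanSpace ℝ (Fin n) → EuclideanSpace ℝ (Fin m) → EuclideanSpace ℝ (Fin n))
    (Lf : ℝ) (hLf : 0 ≤ Lf)
    (hf : ∀ (s₁ s₂ : EuclideanSpace ℝ (Fin n)) (e₁ e₂ : EuclideanSpace ℝ (Fin m)),
      ‖f s₁ e₁ - f s₂ e₂‖ ≤ Lf * (‖s₁ - s₂‖ + ‖e₁ - e₂‖))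
    (s : EuclideanSpace ℝ (Fin n)) (e₁ e₂ : EuclideanSpace ℝ (Fin m)) (t : ℕ) :
    ‖traj f s e₁ t - traj f s e₂ t‖ ≤ ((1 + Lf) ^ t - 1) * ‖e₁ - e₂‖ := by
  induction t with
  | zero => simp [traj]
  | succ t ih =>
    have h1 : traj f s e₁ (t+1) - traj f s e₂ (t+1)
        = (traj f s e₁ t - traj f s e₂ t) + (f (traj f s e₁ t) e₁ - f (traj f s e₂ t) e₂) := by
      simp [traj]; abel
    calc ‖traj f s e₁ (t+1) - traj f s e₂ (t+1)‖
        ≤ ‖traj f s e₁ t - traj f s e₂ t‖ + ‖f (traj f s e₁ t) e₁ - f (traj f s e₂ t) e₂‖ := by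
          rw [h1]; exact norm_add_le _ _
      _ ≤ ‖traj f s e₁ t - traj f s e₂ t‖
            + Lf * (‖traj f s e₁ t - traj f s e₂ t‖ + ‖e₁ - e₂‖) := by
          linarith [hf (traj f s e₁ t) (traj f s e₂ t) e₁ e₂]
      _ = (1 + Lf) * ‖traj f s e₁ t - traj f s e₂ t‖ + Lf * ‖e₁ - e₂‖ := by ring
      _ ≤ (1 + Lf) * (((1 + Lf) ^ t - 1) * ‖e₁ - e₂‖) + Lf * ‖e₁ - e₂‖ := by
          have : (0:ℝ) ≤ 1 + Lf := by linarith
          nlinarith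
      _ = ((1 + Lf) ^ (t+1) - 1) * ‖e₁ - e₂‖ := by ring
end
end

section
/- Let γ ∈ (0,1) and L > 0 satisfy γ(1 + L) < 1, and define g : ℝ → ℝ by g(t) = γ^t((1 + L)^t − 1) (real exponents). Let t* = log(log γ / log(γ(1 + L))) / log(1 + L). Then t* > 0, (1 + L)^{t*} = log γ / log(γ(1 + L)), and g attains its maximum over [0, ∞) at t*, with maximum value g(t*) = γ^{t*} · log(1 + L) / (−log(γ(1 + L))); that is, g(t) ≤ γ^{t*} · log(1 + L) / (−log(γ(1 + L))) for all t ≥ 0, with equality at t = t*. -/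
open Real

/-!
Writing `δ = γ (1 + L)`, the function is `g t = δ ^ t - γ ^ t`, and `δ = γ ^ p` with
`p = log δ / log γ ∈ (0, 1)`. Bernoulli's inequality for the exponent `p` bounds `δ ^ t` by its
tangent in the variable `γ ^ t` at any point `T`; when the tangent has slope one, i.e.
`p δ ^ T = γ ^ T`, this says exactly `g t ≤ g T` for every real `t`. That condition reads
`(1 + L) ^ T = 1 / p`, which is the closed form of `t*`.
-/

namespace Real

theorem rpow_sub_rpow_le_of_mul_rpow_eq {γ δ p T : ℝ} (hγ : 0 < γ) (hp₀ : 0 ≤ p) (hp₁ : p ≤ 1)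
    (hδ : γ ^ p = δ) (hT : p * δ ^ T = γ ^ T) (t : ℝ) :
    δ ^ t - γ ^ t ≤ δ ^ T - γ ^ T := by
  have hδ_pos : 0 < δ := hδ ▸ rpow_pos_of_pos hγ p
  have bernoulli : δ ^ (t - T) ≤ 1 + p * (γ ^ (t - T) - 1) := by
    have := rpow_one_add_le_one_add_mul_self
      (by linarith [rpow_pos_of_pos hγ (t - T)] : -1 ≤ γ ^ (t - T) - 1) hp₀ hp₁
    rwa [add_sub_cancel, ← rpow_mul hγ.le, mul_comm, rpow_mul hγ.le, hδ] at this
  calc δ ^ t - γ ^ t = δ ^ T * δ ^ (t - T) - γ ^ t := by rw [← rpow_add hδ_pos, add_sub_cancel]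
    _ ≤ δ ^ T * (1 + p * (γ ^ (t - T) - 1)) - γ ^ t := by gcongr
    _ = δ ^ T + p * δ ^ T * (γ ^ (t - T) - 1) - γ ^ t := by ring
    _ = δ ^ T - γ ^ T := by
      rw [hT, mul_sub, ← rpow_add hγ, add_sub_cancel]
      ring

end Real

theorem discounted_divergence_factor_max_general (γ L : ℝ)
    (hγ0 : 0 < γ) (hL : 0 < L) (h : γ * (1 + L) < 1) :
    0 < Real.log (Real.log γ / Real.log (γ * (1 + L))) / Real.log (1 + L) ∧
    (1 + L) ^ (Real.log (Real.log γ / Real.log (γ * (1 + L))) / Real.log (1 + L)) =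
      Real.log γ / Real.log (γ * (1 + L)) ∧
    γ ^ (Real.log (Real.log γ / Real.log (γ * (1 + L))) / Real.log (1 + L)) *
        ((1 + L) ^ (Real.log (Real.log γ / Real.log (γ * (1 + L))) / Real.log (1 + L)) - 1) =
      γ ^ (Real.log (Real.log γ / Real.log (γ * (1 + L))) / Real.log (1 + L)) *
        Real.log (1 + L) / (-Real.log (γ * (1 + L))) ∧
    ∀ t : ℝ, 0 ≤ t →
      γ ^ t * ((1 + L) ^ t - 1) ≤
        γ ^ (Real.log (Real.log γ / Real.log (γ * (1 + L))) / Real.log (1 + L)) *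
          Real.log (1 + L) / (-Real.log (γ * (1 + L))) := by
  have h1L : 1 < 1 + L := by linarith
  have hγδ : γ < γ * (1 + L) := lt_mul_of_one_lt_right hγ0 h1L
  have hlogδ : log (γ * (1 + L)) < 0 := log_neg (hγ0.trans hγδ) h
  set r := log γ / log (γ * (1 + L)) with hr_def
  have hr : 1 < r := (one_lt_div_of_neg hlogδ).2 (log_lt_log hγ0 hγδ)
  have hpow : (1 + L) ^ (log r / log (1 + L)) = r :=
    rpow_logb (by linarith) h1L.ne' (by linarith)
  have hγ_pow : γ ^ r⁻¹ = γ * (1 + L) := by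
    rw [hr_def, inv_div]
    exact rpow_logb hγ0 (hγδ.trans h).ne (hγ0.trans hγδ)
  have hr_sub : r - 1 = log (1 + L) / -log (γ * (1 + L)) := by
    rw [hr_def, div_sub_one hlogδ.ne, div_neg, ← neg_div, log_mul hγ0.ne' (by linarith)]
    ring
  have hg : ∀ t : ℝ, γ ^ t * ((1 + L) ^ t - 1) = (γ * (1 + L)) ^ t - γ ^ t := fun t => by
    rw [mul_rpow hγ0.le (by linarith)]
    ring
  have hvalue : γ ^ (log r / log (1 + L)) * ((1 + L) ^ (log r / log (1 + L)) - 1) =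
      γ ^ (log r / log (1 + L)) * log (1 + L) / -log (γ * (1 + L)) := by
    rw [hpow, hr_sub, mul_div_assoc]
  refine ⟨div_pos (log_pos hr) (log_pos h1L), hpow, hvalue, fun t _ => ?_⟩
  rw [← hvalue, hg, hg]
  refine rpow_sub_rpow_le_of_mul_rpow_eq hγ0 (by positivity) (inv_le_one_of_one_le₀ hr.le)
    hγ_pow ?_ t
  rw [mul_rpow hγ0.le (by linarith), hpow, mul_left_comm, inv_mul_cancel₀ (by positivity), mul_one]

/-- Closed-form maximizer of the discounted trajectory-divergence factor
`g(t) = γ^t((1 + L)^t − 1)` (real exponents): with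
`t* = log(log γ / log(γ(1 + L))) / log(1 + L)`, we have `t* > 0`,
`(1 + L)^{t*} = log γ / log(γ(1 + L))`, and `g` attains its maximum over `[0, ∞)`
at `t*`, with value `γ^{t*} · log(1 + L) / (−log(γ(1 + L)))`. -/
theorem discounted_divergence_factor_max (γ L : ℝ)
    (hγ0 : 0 < γ) (hγ1 : γ < 1) (hL : 0 < L) (h : γ * (1 + L) < 1) :
    0 < Real.log (Real.log γ / Real.log (γ * (1 + L))) / Real.log (1 + L) ∧
    (1 + L) ^ (Real.log (Real.log γ / Real.log (γ * (1 + L))) / Real.log (1 + L)) =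
      Real.log γ / Real.log (γ * (1 + L)) ∧
    γ ^ (Real.log (Real.log γ / Real.log (γ * (1 + L))) / Real.log (1 + L)) *
        ((1 + L) ^ (Real.log (Real.log γ / Real.log (γ * (1 + L))) / Real.log (1 + L)) - 1) =
      γ ^ (Real.log (Real.log γ / Real.log (γ * (1 + L))) / Real.log (1 + L)) *
        Real.log (1 + L) / (-Real.log (γ * (1 + L))) ∧
    ∀ t : ℝ, 0 ≤ t →
      γ ^ t * ((1 + L) ^ t - 1) ≤
        γ ^ (Real.log (Real.log γ / Real.log (γ * (1 + L))) / Real.log (1 + L)) *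
          Real.log (1 + L) / (-Real.log (γ * (1 + L))) :=
  discounted_divergence_factor_max_general γ L hγ0 hL h
end

section
/- Let S and E be the Euclidean spaces ℝ^n and ℝ^m, let f_π : S → E → S be any map, let l, ζ : S → ℝ be bounded functions, and let γ ∈ (0,1). Define the discounted reach-avoid Bellman operator B_γ on the space of bounded functions W : S × E → ℝ by B_γ[W](s,e) = (1 − γ) · max(l(s), ζ(s)) + γ · max(min(W(s + f_π(s,e), e), l(s)), ζ(s)). Then B_γ maps bounded functions to bounded functions and is a γ-contraction in the supremum metric: for all bounded W₁, W₂ : S × E → ℝ, sup_{(s,e)} |B_γ[W₁](s,e) − B_γ[W₂](s,e)| ≤ γ · sup_{(s,e)} |W₁(s,e) − W₂(s,e)|. -/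
noncomputable section

/-- The discounted reach-avoid Bellman (DRABE) operator
`B_γ[W](s,e) = (1 − γ)·max(l(s), ζ(s)) + γ·max(min(W(s + f_π(s,e), e), l(s)), ζ(s))`. -/
def bellman {n m : ℕ}
    (f : EuclideanSpace ℝ (Fin n) → EuclideanSpace ℝ (Fin m) → EuclideanSpace ℝ (Fin n))
    (l ζ : EuclideanSpace ℝ (Fin n) → ℝ) (γ : ℝ)
    (W : EuclideanSpace ℝ (Fin n) → EuclideanSpace ℝ (Fin m) → ℝ)
    (s : EuclideanSpace ℝ (Fin n)) (e : EuclideanSpace ℝ (Fin m)) : ℝ :=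
  (1 - γ) * max (l s) (ζ s) + γ * max (min (W (s + f s e) e) (l s)) (ζ s)

/-- The DRABE operator maps bounded functions to bounded functions and is a
`γ`-contraction in the supremum metric. -/
theorem bellman_contraction {n m : ℕ}
    (f : EuclideanSpace ℝ (Fin n) → EuclideanSpace ℝ (Fin m) → EuclideanSpace ℝ (Fin n))
    (l ζ : EuclideanSpace ℝ (Fin n) → ℝ) (γ : ℝ)
    (hγ0 : 0 < γ) (hγ1 : γ < 1)
    (hl : ∃ C, ∀ s, |l s| ≤ C) (hζ : ∃ C, ∀ s, |ζ s| ≤ C) :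
    (∀ W : EuclideanSpace ℝ (Fin n) → EuclideanSpace ℝ (Fin m) → ℝ,
      (∃ C, ∀ s e, |W s e| ≤ C) → ∃ C, ∀ s e, |bellman f l ζ γ W s e| ≤ C) ∧
    (∀ W₁ W₂ : EuclideanSpace ℝ (Fin n) → EuclideanSpace ℝ (Fin m) → ℝ,
      (∃ C, ∀ s e, |W₁ s e| ≤ C) → (∃ C, ∀ s e, |W₂ s e| ≤ C) →
      (⨆ p : EuclideanSpace ℝ (Fin n) × EuclideanSpace ℝ (Fin m),
          |bellman f l ζ γ W₁ p.1 p.2 - bellman f l ζ γ W₂ p.1 p.2|) ≤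
        γ * ⨆ p : EuclideanSpace ℝ (Fin n) × EuclideanSpace ℝ (Fin m),
          |W₁ p.1 p.2 - W₂ p.1 p.2|) := by
  obtain ⟨Cl, hCl⟩ := hl
  obtain ⟨Cζ, hCζ⟩ := hζ
  constructor
  · intro W ⟨CW, hCW⟩
    refine ⟨|1 - γ| * (Cl + Cζ) + |γ| * (CW + Cl + Cζ), fun s e => ?_⟩
    unfold bellman
    have h1 : |max (l s) (ζ s)| ≤ Cl + Cζ := by
      have := hCl s; have := hCζ s
      rcases abs_le.1 (hCl s) with ⟨_, _⟩
      rcases abs_le.1 (hCζ s) with ⟨_, _⟩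
      rw [abs_le]; constructor <;> simp [le_max_iff, max_le_iff] <;> constructor <;> linarith
    have h2 : |max (min (W (s + f s e) e) (l s)) (ζ s)| ≤ CW + Cl + Cζ := by
      rcases abs_le.1 (hCl s) with ⟨_, _⟩
      rcases abs_le.1 (hCζ s) with ⟨_, _⟩
      rcases abs_le.1 (hCW (s + f s e) e) with ⟨_, _⟩
      rw [abs_le]; constructor
      · simp only [le_max_iff, le_min_iff]; right; linarith
      · simp only [max_le_iff, min_le_iff]; constructor
        · left; linarith
        · linarith
    calc |(1 - γ) * max (l s) (ζ s) + γ * max (min (W (s + f s e) e) (l s)) (ζ s)|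
        ≤ |(1 - γ) * max (l s) (ζ s)| + |γ * max (min (W (s + f s e) e) (l s)) (ζ s)| :=
          abs_add_le _ _
      _ ≤ |1 - γ| * (Cl + Cζ) + |γ| * (CW + Cl + Cζ) := by
          rw [abs_mul, abs_mul]
          gcongr <;> positivity
  · intro W₁ W₂ ⟨C₁, hC₁⟩ ⟨C₂, hC₂⟩
    have hbdd : BddAbove (Set.range fun p :
        EuclideanSpace ℝ (Fin n) × EuclideanSpace ℝ (Fin m) => |W₁ p.1 p.2 - W₂ p.1 p.2|) := by
      refine ⟨C₁ + C₂, ?_⟩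
      rintro x ⟨p, rfl⟩
      calc |W₁ p.1 p.2 - W₂ p.1 p.2| ≤ |W₁ p.1 p.2| + |W₂ p.1 p.2| := abs_sub _ _
        _ ≤ C₁ + C₂ := add_le_add (hC₁ _ _) (hC₂ _ _)
    refine ciSup_le fun p => ?_
    obtain ⟨s, e⟩ := p
    have key : |bellman f l ζ γ W₁ s e - bellman f l ζ γ W₂ s e| ≤
        γ * |W₁ (s + f s e) e - W₂ (s + f s e) e| := by
      unfold bellman
      have h : (1 - γ) * max (l s) (ζ s) + γ * max (min (W₁ (s + f s e) e) (l s)) (ζ s)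
          - ((1 - γ) * max (l s) (ζ s) + γ * max (min (W₂ (s + f s e) e) (l s)) (ζ s))
          = γ * (max (min (W₁ (s + f s e) e) (l s)) (ζ s)
              - max (min (W₂ (s + f s e) e) (l s)) (ζ s)) := by ring
      rw [h, abs_mul, abs_of_pos hγ0]
      refine mul_le_mul_of_nonneg_left ?_ hγ0.le
      calc |max (min (W₁ (s + f s e) e) (l s)) (ζ s)
              - max (min (W₂ (s + f s e) e) (l s)) (ζ s)|
          ≤ max |min (W₁ (s + f s e) e) (l s) - min (W₂ (s + f s e) e) (l s)| |ζ s - ζ s| :=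
            abs_max_sub_max_le_max _ _ _ _
        _ ≤ |W₁ (s + f s e) e - W₂ (s + f s e) e| := by
            have := abs_min_sub_min_le_max (W₁ (s + f s e) e) (l s) (W₂ (s + f s e) e) (l s)
            simp only [sub_self, abs_zero] at *
            refine max_le ?_ (abs_nonneg _)
            refine this.trans (max_le le_rfl (by simp [abs_nonneg]))
    refine key.trans ?_
    gcongr
    exact le_ciSup hbdd (s + f s e, e)
end
end

section
/- Let S and E be the Euclidean spaces ℝ^n and ℝ^m, let f_π : S → E → S be any map, let l, ζ : S → ℝ be bounded functions, and let γ ∈ (0,1). Define the discounted reach-avoid Bellman operator B_γ on bounded functions W : S × E → ℝ by B_γ[W](s,e) = (1 − γ) · max(l(s), ζ(s)) + γ · max(min(W(s + f_π(s,e), e), l(s)), ζ(s)). Then B_γ has a unique bounded fixed point V* : S × E → ℝ with B_γ[V*] = V*, and for every bounded W₀ : S × E → ℝ the value-iteration sequence W_{k+1} = B_γ[W_k] converges uniformly to V*. -/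
noncomputable section

/-- `|min a c - min b c| ≤ |a - b|`. -/
lemma abs_min_sub_min_le_abs' (a b c : ℝ) : |min a c - min b c| ≤ |a - b| := by
  have h := abs_max_sub_max_le_abs (-a) (-b) (-c)
  rw [max_neg_neg, max_neg_neg] at h
  calc |min a c - min b c| = |-(min a c) - -(min b c)| := by
        rw [abs_sub_comm, neg_sub_neg]
    _ ≤ |(-a) - (-b)| := h
    _ = |a - b| := by rw [abs_sub_comm, neg_sub_neg]

/-- Banach fixed-point packaging for a γ-contraction on bounded functions `ι → ℝ`,
realized inside the complete space `lp (fun _ : ι => ℝ) ∞`. -/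
theorem general_fixed_point {ι : Type} [Nonempty ι]
    (B : (ι → ℝ) → (ι → ℝ)) (γ : ℝ) (hγ0 : 0 < γ) (hγ1 : γ < 1)
    (hBdd : ∀ g : ι → ℝ, (∃ C, ∀ p, |g p| ≤ C) → (∃ C, ∀ p, |B g p| ≤ C))
    (hLip : ∀ g h : ι → ℝ, ∀ D, 0 ≤ D → (∀ p, |g p - h p| ≤ D) →
      ∀ p, |B g p - B h p| ≤ γ * D) :
    ∃ V : ι → ℝ, (∃ C, ∀ p, |V p| ≤ C) ∧ B V = V ∧
      (∀ V' : ι → ℝ, (∃ C, ∀ p, |V' p| ≤ C) → B V' = V' → V' = V) ∧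
      (∀ W₀ : ι → ℝ, (∃ C, ∀ p, |W₀ p| ≤ C) →
        TendstoUniformly (fun k p => B^[k] W₀ p) V Filter.atTop) := by
  classical
  have mem_of_bdd : ∀ (g : ι → ℝ), (∃ C, ∀ p, |g p| ≤ C) → Memℓp g (⊤ : ENNReal) := by
    rintro g ⟨C, hC⟩
    apply memℓp_infty
    refine ⟨C, ?_⟩
    rintro x ⟨p, rfl⟩
    show ‖g p‖ ≤ C
    rw [Real.norm_eq_abs]
    exact hC p
  have ptle : ∀ (F G : lp (fun _ : ι => ℝ) ⊤) (p : ι),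
      |(F : ι → ℝ) p - (G : ι → ℝ) p| ≤ ‖F - G‖ := by
    intro F G p
    have h := lp.norm_apply_le_norm ENNReal.top_ne_zero (F - G) p
    rw [Real.norm_eq_abs] at h
    have hc : ((F - G : lp (fun _ : ι => ℝ) ⊤) : ι → ℝ) p = (F : ι → ℝ) p - (G : ι → ℝ) p := rfl
    rwa [hc] at h
  have lpbdd : ∀ (F : lp (fun _ : ι => ℝ) ⊤), ∃ C, ∀ p : ι, |(F : ι → ℝ) p| ≤ C := by
    intro F
    refine ⟨‖F‖, fun p => ?_⟩
    have h := lp.norm_apply_le_norm ENNReal.top_ne_zero F p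
    rwa [Real.norm_eq_abs] at h
  let T : lp (fun _ : ι => ℝ) ⊤ → lp (fun _ : ι => ℝ) ⊤ := fun F =>
    ⟨B F, mem_of_bdd _ (hBdd _ (lpbdd F))⟩
  have T_apply : ∀ (F : lp (fun _ : ι => ℝ) ⊤), (T F : ι → ℝ) = B F := fun F => rfl
  have hlipT : LipschitzWith ⟨γ, hγ0.le⟩ T := by
    apply LipschitzWith.of_dist_le_mul
    intro F G
    rw [dist_eq_norm, dist_eq_norm]
    have hB := hLip F G ‖F - G‖ (norm_nonneg _) (ptle F G)
    refine lp.norm_le_of_forall_le (mul_nonneg hγ0.le (norm_nonneg _)) ?_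
    intro p
    rw [Real.norm_eq_abs]
    have hc : ((T F - T G : lp (fun _ : ι => ℝ) ⊤) : ι → ℝ) p = B F p - B G p := rfl
    rw [hc]
    exact hB p
  have hcontr : ContractingWith ⟨γ, hγ0.le⟩ T := ⟨by exact_mod_cast hγ1, hlipT⟩
  haveI : Nonempty (lp (fun _ : ι => ℝ) ⊤) := ⟨0⟩
  set Fstar := hcontr.fixedPoint T with hFstar
  have hfix : T Fstar = Fstar := hcontr.fixedPoint_isFixedPt
  refine ⟨Fstar, lpbdd Fstar, ?_, ?_, ?_⟩
  · exact congrArg (fun (G : lp (fun _ : ι => ℝ) ⊤) => (G : ι → ℝ)) hfix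
  · rintro V' hV'b hV'
    set F' : lp (fun _ : ι => ℝ) ⊤ := ⟨V', mem_of_bdd _ hV'b⟩ with hF'
    have hfix' : Function.IsFixedPt T F' := by
      apply Subtype.ext
      rw [T_apply]
      exact hV'
    have h := hcontr.fixedPoint_unique hfix'
    exact congrArg (fun (G : lp (fun _ : ι => ℝ) ⊤) => (G : ι → ℝ)) h
  · rintro W₀ hW₀
    set F₀ : lp (fun _ : ι => ℝ) ⊤ := ⟨W₀, mem_of_bdd _ hW₀⟩ with hF₀
    have iterate_eq : ∀ k, B^[k] W₀ = ((T^[k] F₀ : lp (fun _ : ι => ℝ) ⊤) : ι → ℝ) := by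
      intro k
      induction k with
      | zero => rfl
      | succ k ih =>
        rw [Function.iterate_succ_apply', Function.iterate_succ_apply', ih]
    have htend := hcontr.tendsto_iterate_fixedPoint F₀
    rw [Metric.tendstoUniformly_iff]
    intro ε hε
    rw [Metric.tendsto_atTop] at htend
    obtain ⟨N, hN⟩ := htend ε hε
    filter_upwards [Filter.eventually_ge_atTop N] with k hk p
    have hnorm := hN k hk
    rw [dist_eq_norm] at hnorm
    have hp := ptle (T^[k] F₀) Fstar p
    rw [iterate_eq k, Real.dist_eq, abs_sub_comm]
    exact lt_of_le_of_lt hp hnorm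

/-- The DRABE operator has a unique bounded fixed point `V*`, and value iteration
from every bounded `W₀` converges uniformly to `V*`. -/
theorem bellman_fixed_point {n m : ℕ}
    (f : EuclideanSpace ℝ (Fin n) → EuclideanSpace ℝ (Fin m) → EuclideanSpace ℝ (Fin n))
    (l ζ : EuclideanSpace ℝ (Fin n) → ℝ) (γ : ℝ)
    (hγ0 : 0 < γ) (hγ1 : γ < 1)
    (hl : ∃ C, ∀ s, |l s| ≤ C) (hζ : ∃ C, ∀ s, |ζ s| ≤ C) :
    ∃ Vstar : EuclideanSpace ℝ (Fin n) → EuclideanSpace ℝ (Fin m) → ℝ,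
      (∃ C, ∀ s e, |Vstar s e| ≤ C) ∧
      bellman f l ζ γ Vstar = Vstar ∧
      (∀ V' : EuclideanSpace ℝ (Fin n) → EuclideanSpace ℝ (Fin m) → ℝ,
        (∃ C, ∀ s e, |V' s e| ≤ C) → bellman f l ζ γ V' = V' → V' = Vstar) ∧
      (∀ W₀ : EuclideanSpace ℝ (Fin n) → EuclideanSpace ℝ (Fin m) → ℝ,
        (∃ C, ∀ s e, |W₀ s e| ≤ C) →
        TendstoUniformly
          (fun k (p : EuclideanSpace ℝ (Fin n) × EuclideanSpace ℝ (Fin m)) =>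
            ((fun W => bellman f l ζ γ W)^[k] W₀) p.1 p.2)
          (fun p => Vstar p.1 p.2) Filter.atTop) := by
  classical
  obtain ⟨Cl, hCl⟩ := hl
  obtain ⟨Cζ, hCζ⟩ := hζ
  -- the uncurried Bellman operator
  let B : (EuclideanSpace ℝ (Fin n) × EuclideanSpace ℝ (Fin m) → ℝ) →
      (EuclideanSpace ℝ (Fin n) × EuclideanSpace ℝ (Fin m) → ℝ) :=
    fun g p => (1 - γ) * max (l p.1) (ζ p.1) +
      γ * max (min (g (p.1 + f p.1 p.2, p.2)) (l p.1)) (ζ p.1)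
  have hBcurry : ∀ (W : EuclideanSpace ℝ (Fin n) → EuclideanSpace ℝ (Fin m) → ℝ)
      (p : EuclideanSpace ℝ (Fin n) × EuclideanSpace ℝ (Fin m)),
      B (fun q => W q.1 q.2) p = bellman f l ζ γ W p.1 p.2 := fun W p => rfl
  have hBdd : ∀ g, (∃ C, ∀ p, |g p| ≤ C) → (∃ C, ∀ p, |B g p| ≤ C) := by
    rintro g ⟨C, hC⟩
    refine ⟨(1 - γ) * max Cl Cζ + γ * max (max C Cl) Cζ, fun p => ?_⟩
    have h1 : |max (l p.1) (ζ p.1)| ≤ max Cl Cζ :=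
      le_trans abs_max_le_max_abs_abs (max_le_max (hCl p.1) (hCζ p.1))
    have h2 : |max (min (g (p.1 + f p.1 p.2, p.2)) (l p.1)) (ζ p.1)| ≤ max (max C Cl) Cζ := by
      refine le_trans abs_max_le_max_abs_abs (max_le_max ?_ (hCζ p.1))
      exact le_trans abs_min_le_max_abs_abs (max_le_max (hC _) (hCl p.1))
    calc |B g p| ≤ |(1 - γ) * max (l p.1) (ζ p.1)| +
          |γ * max (min (g (p.1 + f p.1 p.2, p.2)) (l p.1)) (ζ p.1)| := abs_add_le _ _
      _ = (1 - γ) * |max (l p.1) (ζ p.1)| +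
          γ * |max (min (g (p.1 + f p.1 p.2, p.2)) (l p.1)) (ζ p.1)| := by
          rw [abs_mul, abs_mul, abs_of_pos (by linarith : (0:ℝ) < 1 - γ), abs_of_pos hγ0]
      _ ≤ (1 - γ) * max Cl Cζ + γ * max (max C Cl) Cζ := by
          have hγ' : (0:ℝ) ≤ 1 - γ := by linarith
          exact add_le_add (mul_le_mul_of_nonneg_left h1 hγ')
            (mul_le_mul_of_nonneg_left h2 hγ0.le)
  have hLip : ∀ g h, ∀ D, 0 ≤ D → (∀ p, |g p - h p| ≤ D) → ∀ p, |B g p - B h p| ≤ γ * D := by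
    intro g h D hD hgh p
    have key : B g p - B h p =
        γ * (max (min (g (p.1 + f p.1 p.2, p.2)) (l p.1)) (ζ p.1) -
          max (min (h (p.1 + f p.1 p.2, p.2)) (l p.1)) (ζ p.1)) := by
      show ((1 - γ) * max (l p.1) (ζ p.1) + _) - ((1 - γ) * max (l p.1) (ζ p.1) + _) = _
      ring
    rw [key, abs_mul, abs_of_pos hγ0]
    refine mul_le_mul_of_nonneg_left ?_ hγ0.le
    refine le_trans (abs_max_sub_max_le_abs _ _ _) ?_
    exact le_trans (abs_min_sub_min_le_abs' _ _ _) (hgh _)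
  obtain ⟨V, hVb, hVfix, hVuniq, hVconv⟩ := general_fixed_point B γ hγ0 hγ1 hBdd hLip
  refine ⟨fun s e => V (s, e), ⟨hVb.choose, fun s e => hVb.choose_spec (s, e)⟩, ?_, ?_, ?_⟩
  · funext s e
    have h1 : B (fun q => V (q.1, q.2)) (s, e) = bellman f l ζ γ (fun s e => V (s, e)) s e :=
      hBcurry (fun s e => V (s, e)) (s, e)
    have h2 : (fun q : EuclideanSpace ℝ (Fin n) × EuclideanSpace ℝ (Fin m) => V (q.1, q.2))
        = V := by funext q; rfl
    rw [h2] at h1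
    rw [← h1, hVfix]
  · rintro V' ⟨C, hC⟩ hV'
    have hfix' : B (fun q => V' q.1 q.2) = fun q => V' q.1 q.2 := by
      funext p
      rw [hBcurry V' p, hV']
    have := hVuniq (fun q => V' q.1 q.2) ⟨C, fun p => hC p.1 p.2⟩ hfix'
    funext s e
    exact congrFun this (s, e)
  · rintro W₀ ⟨C, hC⟩
    have iter_eq : ∀ k (p : EuclideanSpace ℝ (Fin n) × EuclideanSpace ℝ (Fin m)),
        ((fun W => bellman f l ζ γ W)^[k] W₀) p.1 p.2 = B^[k] (fun q => W₀ q.1 q.2) p := by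
      intro k
      induction k with
      | zero => intro p; rfl
      | succ k ih =>
        intro p
        rw [Function.iterate_succ_apply', Function.iterate_succ_apply']
        have h2 : (fun q : EuclideanSpace ℝ (Fin n) × EuclideanSpace ℝ (Fin m) =>
            ((fun W => bellman f l ζ γ W)^[k] W₀) q.1 q.2)
            = B^[k] (fun q => W₀ q.1 q.2) := by funext q; exact ih q
        calc bellman f l ζ γ ((fun W => bellman f l ζ γ W)^[k] W₀) p.1 p.2
            = B (fun q => ((fun W => bellman f l ζ γ W)^[k] W₀) q.1 q.2) p :=
              (hBcurry _ p).symm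
          _ = B (B^[k] (fun q => W₀ q.1 q.2)) p := by rw [h2]
    have hconv := hVconv (fun q => W₀ q.1 q.2) ⟨C, fun p => hC p.1 p.2⟩
    have heq : (fun k (p : EuclideanSpace ℝ (Fin n) × EuclideanSpace ℝ (Fin m)) =>
        ((fun W => bellman f l ζ γ W)^[k] W₀) p.1 p.2)
        = fun k p => B^[k] (fun q => W₀ q.1 q.2) p := by
      funext k p; exact iter_eq k p
    rw [heq]
    have heq2 : (fun p : EuclideanSpace ℝ (Fin n) × EuclideanSpace ℝ (Fin m) =>
        V (p.1, p.2)) = V := by funext p; rfl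
    rw [heq2]
    exact hconv
end
end
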